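/- arXiv:2012.09502 — 5 statements merged into one kernel-verified Lean document; each statement's English description precedes it below -/
import Mathlib

section
/- Let G be a finite weighted directed Eulerian multigraph (for every vertex v, the total weight of incoming edges equals the total weight of outgoing edges). Then for every edge e of G there exists a directed cycle C containing e such that every edge e' of C has weight w(e') ≥ w(e)/m, where m is the number of edges of G. -/
/-!
Call an edge heavy if its weight is at least `θ = w a b / m`, and let `S` be the set of vertices
reachable from `b` along heavy edges. If `a ∉ S`, the edge `a → b` alone carries `w a b` into `S`,
whereas fewer than `m` edges leave `S` (the positive edge `a → b` does not), all of them light, so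
less than `m θ = w a b` flows out of `S`. This contradicts the Eulerian condition, which balances
the flow across every cut. Hence a heavy path leads from `b` back to `a`; erasing its loops and
closing it with `a → b` gives the cycle.
-/

/-- The directed edges of a cycle given by its list of vertices `l`:
consecutive pairs, wrapping around from the last vertex back to the first. -/
def cycleEdges {V : Type*} (l : List V) : List (V × V) :=
  l.zip (l.rotate 1)

open Finset Relation

section Cycles

variable {α : Type*} {r : α → α → Prop}

theorem cycleEdges_cons (x : α) (l : List α) : cycleEdges (x :: l) = (x :: l).zip (l ++ [x]) := by
  simp [cycleEdges, List.rotate_cons_succ]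

theorem forall_mem_cycleEdges_cons {x : α} {l : List α} (h : List.IsChain r (x :: l ++ [x])) :
    ∀ p ∈ cycleEdges (x :: l), r p.1 p.2 := by
  rw [cycleEdges_cons]
  exact fun p hp =>
    (List.forall₂_iff_zip.mp (List.isChain_cons_append_singleton_iff_forall₂.mp h)).2 hp

theorem List.exists_nodup_isChain_cons_of_relationReflTransGen {a b : α} (h : ReflTransGen r a b) :
    ∃ l, List.IsChain r (a :: l) ∧ (a :: l).getLast (List.cons_ne_nil _ _) = b ∧
      (a :: l).Nodup := by
  induction h using ReflTransGen.head_induction_on with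
  | refl => exact ⟨[], .singleton _, rfl, List.nodup_singleton _⟩
  | @head x z hxz _ ih =>
    obtain ⟨l, hchain, hlast, hnodup⟩ := ih
    by_cases hx : x ∈ z :: l
    · -- shortcut the path at the earlier visit of `x`
      obtain ⟨s, t, hst⟩ := List.append_of_mem hx
      rw [hst] at hchain hnodup
      refine ⟨t, hchain.suffix ⟨s, rfl⟩, ?_, hnodup.sublist (List.sublist_append_right _ _)⟩
      rw [← hlast]
      simp [hst]
    · exact ⟨z :: l, hchain.cons_cons hxz, by rwa [List.getLast_cons_cons],
        List.nodup_cons.mpr ⟨hx, hnodup⟩⟩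

theorem exists_cycle_of_rel_of_reflTransGen {a b : α} (hab : r a b) (hba : ReflTransGen r b a) :
    ∃ l : List α, l ≠ [] ∧ l.Nodup ∧ (a, b) ∈ cycleEdges l ∧ ∀ p ∈ cycleEdges l, r p.1 p.2 := by
  obtain ⟨l, hchain, hlast, hnodup⟩ := List.exists_nodup_isChain_cons_of_relationReflTransGen hba
  set p := (b :: l).dropLast
  have hpath : p ++ [a] = b :: l := hlast ▸ List.dropLast_append_getLast _
  refine ⟨a :: p, List.cons_ne_nil _ _, ?_, ?_, forall_mem_cycleEdges_cons ?_⟩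
  · exact (List.perm_append_singleton a p).nodup_iff.mp (hpath ▸ hnodup)
  · simp [cycleEdges_cons, hpath]
  · rw [List.cons_append, hpath]
    exact hchain.cons_cons hab

end Cycles

theorem sum_lt_card_filter_pos_mul {ι : Type*} [Fintype ι] {f : ι → ℝ} {s : Finset ι} {θ : ℝ}
    {j : ι} (hf : ∀ i, 0 ≤ f i) (hθ : 0 < θ) (hs : ∀ i ∈ s, f i < θ) (hj : 0 < f j) (hjs : j ∉ s) :
    ∑ i ∈ s, f i < #{i | 0 < f i} * θ := by
  have hsupp : s.filter (0 < f ·) ⊂ ({i | 0 < f i} : Finset ι) :=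
    ssubset_iff_of_subset (fun i hi => by simpa using (mem_filter.mp hi).2) |>.mpr
      ⟨j, by simpa using hj, fun hj' => hjs (mem_filter.mp hj').1⟩
  calc ∑ i ∈ s, f i = ∑ i ∈ s.filter (0 < f ·), f i :=
        (sum_filter_of_ne fun i _ hi => (hf i).lt_of_ne' hi).symm
    _ ≤ #(s.filter (0 < f ·)) • θ :=
        sum_le_card_nsmul _ _ _ fun i hi => (hs i (mem_filter.mp hi).1).le
    _ < #{i | 0 < f i} * θ := by
        rw [nsmul_eq_mul]
        exact mul_lt_mul_of_pos_right (by exact_mod_cast card_lt_card hsupp) hθ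

section Eulerian

variable {V : Type*} [Fintype V]

def IsEulerian {β : Type*} [AddCommMonoid β] (w : V → V → β) : Prop :=
  ∀ v, ∑ u, w u v = ∑ u, w v u

theorem IsEulerian.sum_in_eq_sum_out [DecidableEq V] {β : Type*} [AddCommGroup β] {w : V → V → β}
    (heul : IsEulerian w) (S : Finset V) :
    ∑ v ∈ S, ∑ u ∈ Sᶜ, w u v = ∑ u ∈ S, ∑ v ∈ Sᶜ, w u v := by
  have h : ∑ v ∈ S, ∑ u, w u v = ∑ v ∈ S, ∑ u, w v u := sum_congr rfl fun v _ => heul v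
  simp only [← sum_add_sum_compl S, sum_add_distrib] at h
  rw [sum_comm (s := S) (t := S)] at h
  exact add_left_cancel h

theorem IsEulerian.reflTransGen_div_card_le {w : V → V → ℝ} (heul : IsEulerian w)
    (hw : ∀ u v, 0 ≤ w u v) {a b : V} (hab : 0 < w a b) :
    ReflTransGen (fun u v => w a b / #{p : V × V | 0 < w p.1 p.2} ≤ w u v) b a := by
  classical
  set m := #{p : V × V | 0 < w p.1 p.2}
  set heavy := fun u v => w a b / m ≤ w u v
  have hm : (0 : ℝ) < m := by exact_mod_cast card_pos.mpr ⟨(a, b), by simpa using hab⟩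
  by_contra hba
  set S : Finset V := {v | ReflTransGen heavy b v}
  have hbS : b ∈ S := mem_filter.mpr ⟨mem_univ _, .refl⟩
  have haS : a ∉ S := by simpa [S] using hba
  have hlight : ∀ p ∈ S ×ˢ Sᶜ, w p.1 p.2 < w a b / m := by
    rintro ⟨u, v⟩ huv
    simp only [S, mem_product, mem_compl, mem_filter, mem_univ, true_and] at huv
    exact lt_of_not_ge fun h => huv.2 (huv.1.tail h)
  have hin : w a b ≤ ∑ v ∈ S, ∑ u ∈ Sᶜ, w u v :=
    calc w a b ≤ ∑ u ∈ Sᶜ, w u b := single_le_sum (fun u _ => hw u b) (mem_compl.mpr haS)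
      _ ≤ ∑ v ∈ S, ∑ u ∈ Sᶜ, w u v := single_le_sum (fun v _ => sum_nonneg fun u _ => hw u v) hbS
  have hout : ∑ u ∈ S, ∑ v ∈ Sᶜ, w u v < m * (w a b / m) := by
    rw [← sum_product']
    exact sum_lt_card_filter_pos_mul (f := fun p : V × V => w p.1 p.2) (fun p => hw _ _)
      (div_pos hab hm) hlight (j := (a, b)) hab (by simp [haS])
  rw [mul_div_cancel₀ _ hm.ne', ← heul.sum_in_eq_sum_out] at hout
  exact hout.not_ge hin

end Eulerian

theorem stmt0_general {V : Type*} [Fintype V]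
    (w : V → V → ℝ) (hw : ∀ a b, 0 ≤ w a b)
    (m : ℕ)
    (hm : m = (Finset.univ.filter (fun p : V × V => 0 < w p.1 p.2)).card)
    (heul : ∀ v, ∑ u, w u v = ∑ u, w v u)
    (a b : V) (hab : 0 < w a b) :
    ∃ l : List V, l ≠ [] ∧ l.Nodup ∧ (a, b) ∈ cycleEdges l ∧
      ∀ p ∈ cycleEdges l, w a b / m ≤ w p.1 p.2 := by
  subst hm
  refine exists_cycle_of_rel_of_reflTransGen ?_ (IsEulerian.reflTransGen_div_card_le heul hw hab)
  exact div_le_self hab.le (by exact_mod_cast one_le_card.mpr ⟨(a, b), by simpa using hab⟩)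

/-- In a finite weighted directed Eulerian (multi)graph, for every edge `(a,b)`
there is a directed cycle through `(a,b)` all of whose edges have weight at
least `w a b / m`, where `m` is the number of edges. -/
theorem stmt0 {V : Type*} [Fintype V] [DecidableEq V]
    (w : V → V → ℝ) (hw : ∀ a b, 0 ≤ w a b)
    (m : ℕ)
    (hm : m = (Finset.univ.filter (fun p : V × V => 0 < w p.1 p.2)).card)
    (heul : ∀ v, ∑ u, w u v = ∑ u, w v u)
    (a b : V) (hab : 0 < w a b) :
    ∃ l : List V, l ≠ [] ∧ l.Nodup ∧ (a, b) ∈ cycleEdges l ∧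
      ∀ p ∈ cycleEdges l, w a b / m ≤ w p.1 p.2 :=
  stmt0_general w hw m hm heul a b hab
end

section
/- In a finite irreducible Markov chain, for any states v, s, t, u, the expected number of visits to v before first hitting t, starting from s, satisfies the triangle inequality: H_v(s,t) ≤ H_v(s,u) + H_v(u,t). -/
/-!
Let `K` be `P` with column `t` zeroed (the chain killed on entering `t`) and `S` be `K` with
column `u` zeroed as well, and write `G X = ∑ₙ Xⁿ`. From `(1 - K) G K = 1 = G S (1 - S)` one gets
the resolvent identity `G K = G S + G S (K - S) G K`. Since `K - S` lives on column `u`, its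
`(s, v)` entry reads `H_v(s,t) = G S s v + h · H_v(u,t)` with `h = ∑ₐ G S s a · K a u`, the
probability of reaching `u` before `t`, so `h ≤ 1`. And `S ≤ P` killed at `u` entrywise, whence
`G S s v ≤ H_v(s,u)`.

All series converge because, by irreducibility, from every state some power of `K` has row sum
`< 1`; hence `‖Kᴺ‖ < 1` in the `ℓ∞` operator norm for a common `N`.
-/

/-- `visitsBefore P v s t` is the expected number of visits to `v` (counting
time `0`) of the Markov chain with transition matrix `P` started at `s`,
strictly before the first time `n ≥ 1` at which the chain is at `t`.
It equals `∑_{n ≥ 0} (R^n) s v` where `R` is `P` with the column of `t`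
zeroed out (the chain killed upon entering `t`). -/
noncomputable def visitsBefore {V : Type*} [Fintype V] [DecidableEq V]
    (P : Matrix V V ℝ) (v s t : V) : ℝ :=
  ∑' n : ℕ, ((Matrix.of fun a b : V => if b = t then 0 else P a b) ^ n) s v

open Finset Matrix

theorem summable_pow_div {θ : ℝ} (hθ0 : 0 ≤ θ) (hθ1 : θ < 1) {N : ℕ} (hN : 0 < N) :
    Summable fun n : ℕ => θ ^ (n / N) := by
  obtain ⟨ρ, hρ0, hρ1, rfl⟩ : ∃ ρ : ℝ, 0 ≤ ρ ∧ ρ < 1 ∧ ρ ^ N = θ :=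
    ⟨θ ^ (N⁻¹ : ℝ), Real.rpow_nonneg hθ0 _, Real.rpow_lt_one hθ0 hθ1 (by positivity),
      Real.rpow_inv_natCast_pow hθ0 hN.ne'⟩
  rw [← summable_nat_add_iff N]
  refine (summable_geometric_of_lt_one hρ0 hρ1).of_nonneg_of_le (fun n => by positivity)
    fun n => ?_
  rw [← pow_mul, Nat.add_div_right n hN]
  exact pow_le_pow_of_le_one hρ0 hρ1.le (Nat.lt_mul_div_succ n hN).le

theorem NormedRing.summable_pow_of_norm_pow_lt_one {R : Type*} [NormedRing R] [CompleteSpace R]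
    {x : R} {N : ℕ} (hN : 0 < N) (hx : ‖x ^ N‖ < 1) : Summable (x ^ ·) := by
  set C := ∑ r ∈ range N, ‖x ^ r‖
  rw [← summable_nat_add_iff N]
  refine .of_norm_bounded ((summable_pow_div (norm_nonneg _) hx hN).mul_left (‖x ^ N‖ * C))
    fun n => ?_
  calc ‖x ^ (n + N)‖ = ‖(x ^ N) ^ (n / N + 1) * x ^ (n % N)‖ := by
        rw [← pow_mul, ← pow_add, mul_add, mul_one]
        congr 2
        have := Nat.div_add_mod n N
        omega
    _ ≤ ‖(x ^ N) ^ (n / N + 1)‖ * ‖x ^ (n % N)‖ := norm_mul_le _ _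
    _ ≤ ‖x ^ N‖ ^ (n / N + 1) * C :=
        mul_le_mul (norm_pow_le' _ (n / N).succ_pos)
          (single_le_sum (fun _ _ => norm_nonneg _) (mem_range.2 (Nat.mod_lt _ hN)))
          (norm_nonneg _) (by positivity)
    _ = ‖x ^ N‖ * C * ‖x ^ N‖ ^ (n / N) := by ring

theorem eq_add_mul_sub_mul_of_mul_one_sub_eq_one {R : Type*} [Ring R] {x y gx gy : R}
    (hx : (1 - x) * gx = 1) (hy : gy * (1 - y) = 1) : gx = gy + gy * (x - y) * gx :=
  calc gx = gy * (1 - y) * gx := by rw [hy, one_mul]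
    _ = gy * ((1 - x) * gx) + gy * (x - y) * gx := by noncomm_ring
    _ = gy + gy * (x - y) * gx := by rw [hx, mul_one]

namespace Matrix

section OrderedSemiring

variable {n R : Type*} [Fintype n]

theorem sum_row_mul [NonUnitalNonAssocSemiring R] (M N : Matrix n n R) (i : n) :
    ∑ j, (M * N) i j = ∑ k, M i k * ∑ j, N k j := by
  simp only [mul_apply, mul_sum]
  exact sum_comm

variable [DecidableEq n] [Semiring R] [PartialOrder R] [IsOrderedRing R]

def substochastic (R n : Type*) [Fintype n] [DecidableEq n] [Semiring R] [PartialOrder R]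
    [IsOrderedRing R] : Submonoid (Matrix n n R) where
  carrier := {M | (∀ i j, 0 ≤ M i j) ∧ ∀ i, ∑ j, M i j ≤ 1}
  mul_mem' {M N} hM hN := by
    refine ⟨fun i j => sum_nonneg fun k _ => mul_nonneg (hM.1 _ _) (hN.1 _ _), fun i => ?_⟩
    calc ∑ j, (M * N) i j = ∑ k, M i k * ∑ j, N k j := sum_row_mul M N i
      _ ≤ ∑ k, M i k * 1 := sum_le_sum fun k _ => mul_le_mul_of_nonneg_left (hN.2 k) (hM.1 i k)
      _ ≤ 1 := by simpa using hM.2 i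
  one_mem' := by
    refine ⟨fun i j => ?_, fun i => by simp [one_apply]⟩
    rw [one_apply]
    split_ifs <;> simp

theorem rowStochastic_le_substochastic : rowStochastic R n ≤ substochastic R n :=
  fun _ hM => ⟨fun _ _ => nonneg_of_mem_rowStochastic hM,
    fun i => (sum_row_of_mem_rowStochastic hM i).le⟩

theorem pow_apply_le_pow_apply {A B : Matrix n n R} (hA : ∀ i j, 0 ≤ A i j)
    (hAB : ∀ i j, A i j ≤ B i j) (k : ℕ) (i j : n) : (A ^ k) i j ≤ (B ^ k) i j := by
  induction k generalizing j with
  | zero => rfl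
  | succ k ih =>
    rw [pow_succ, pow_succ, mul_apply, mul_apply]
    exact sum_le_sum fun l _ => mul_le_mul (ih l) (hAB l j) (hA l j)
      (pow_apply_nonneg (fun i j => (hA i j).trans (hAB i j)) k i l)

theorem sum_pow_add_apply_le {A : Matrix n n R} (hA : A ∈ substochastic R n) (k l : ℕ) (i : n) :
    ∑ j, (A ^ (k + l)) i j ≤ ∑ j, (A ^ k) i j := by
  have hl := pow_mem hA l
  calc ∑ j, (A ^ (k + l)) i j = ∑ m, (A ^ k) i m * ∑ j, (A ^ l) m j := by
        rw [pow_add, sum_row_mul]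
    _ ≤ ∑ m, (A ^ k) i m * 1 :=
        sum_le_sum fun m _ => mul_le_mul_of_nonneg_left (hl.2 m) ((pow_mem hA k).1 i m)
    _ = ∑ j, (A ^ k) i j := by simp

end OrderedSemiring

section Kill

variable {n R : Type*} [DecidableEq n]

def killAt [Zero R] (A : Matrix n n R) (t : n) : Matrix n n R :=
  of fun i j => if j = t then 0 else A i j

@[simp]
theorem killAt_apply [Zero R] (A : Matrix n n R) (t i j : n) :
    killAt A t i j = if j = t then 0 else A i j := rfl

theorem sub_killAt_apply [AddGroup R] (A : Matrix n n R) (t i j : n) :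
    (A - killAt A t) i j = if j = t then A i t else 0 := by
  by_cases hj : j = t <;> simp [hj]

section Order

variable [PartialOrder R]

theorem killAt_le [Zero R] {A : Matrix n n R} (hA : ∀ i j, 0 ≤ A i j) (t i j : n) :
    killAt A t i j ≤ A i j := by
  by_cases hj : j = t <;> simp [hj, hA]

theorem killAt_nonneg [Zero R] {A : Matrix n n R} (hA : ∀ i j, 0 ≤ A i j) (t i j : n) :
    0 ≤ killAt A t i j := by
  by_cases hj : j = t <;> simp [hj, hA]

theorem killAt_mono [Zero R] {A B : Matrix n n R} (hAB : ∀ i j, A i j ≤ B i j) (t i j : n) :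
    killAt A t i j ≤ killAt B t i j := by
  by_cases hj : j = t <;> simp [hj, hAB]

end Order

variable [Fintype n]

theorem mul_killAt [NonUnitalNonAssocSemiring R] (M A : Matrix n n R) (t : n) :
    M * killAt A t = killAt (M * A) t := by
  ext i j
  by_cases hj : j = t <;> simp [mul_apply, hj]

theorem sum_killAt_apply [AddCommGroup R] (A : Matrix n n R) (t i : n) :
    ∑ j, killAt A t i j = ∑ j, A i j - A i t := by
  simp [sum_ite, filter_ne']

theorem mul_sub_killAt_mul_apply [Ring R] (M A N : Matrix n n R) (t i j : n) :
    (M * (A - killAt A t) * N) i j = (∑ k, M i k * A k t) * N t j := by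
  simp only [mul_apply, sub_killAt_apply, mul_ite, mul_zero]
  simp [sum_ite_irrel, sum_mul]

theorem pow_succ_killAt_apply_le [Semiring R] [PartialOrder R] [IsOrderedRing R]
    {A : Matrix n n R} (hA : ∀ i j, 0 ≤ A i j) (t : n) (k : ℕ) (i j : n) :
    (killAt A t ^ (k + 1)) i j ≤ killAt (A ^ (k + 1)) t i j := by
  by_cases hj : j = t
  · subst hj
    rw [pow_succ, mul_killAt]
    simp
  · simpa [hj] using pow_apply_le_pow_apply (killAt_nonneg hA t) (killAt_le hA t) (k + 1) i j

theorem killAt_mem_substochastic [Ring R] [PartialOrder R] [IsOrderedRing R] {A : Matrix n n R}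
    (hA : A ∈ substochastic R n) (t : n) : killAt A t ∈ substochastic R n :=
  ⟨killAt_nonneg hA.1 t, fun i => by
    rw [sum_killAt_apply]; exact (sub_le_self _ (hA.1 i t)).trans (hA.2 i)⟩

end Kill

section Transient

variable {n : Type*} [Fintype n] [DecidableEq n]

section Norm

-- For nonnegative matrices this norm is the largest row sum.
attribute [local instance] Matrix.linftyOpNormedRing Matrix.linftyOpNormedAlgebra

theorem norm_lt_one_of_sum_apply_lt_one {A : Matrix n n ℝ} (hA : ∀ i j, 0 ≤ A i j)
    (h : ∀ i, ∑ j, A i j < 1) : ‖A‖ < 1 := by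
  rw [linfty_opNorm_def, ← NNReal.coe_one, NNReal.coe_lt_coe, Finset.sup_lt_iff one_pos]
  intro i _
  rw [← NNReal.coe_lt_coe, NNReal.coe_sum]
  simpa [abs_of_nonneg (hA i _)] using h i

theorem summable_pow_of_exists_sum_pow_apply_lt_one {A : Matrix n n ℝ}
    (hA : A ∈ substochastic ℝ n) (h : ∀ i, ∃ k, ∑ j, (A ^ k) i j < 1) : Summable (A ^ ·) := by
  choose k hk using h
  set N := univ.sup k + 1
  refine NormedRing.summable_pow_of_norm_pow_lt_one (by omega)
    (norm_lt_one_of_sum_apply_lt_one (pow_mem hA N).1 fun i => ?_)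
  obtain ⟨l, hl⟩ : ∃ l, N = k i + l := ⟨N - k i, by have := le_sup (f := k) (mem_univ i); omega⟩
  exact (hl ▸ sum_pow_add_apply_le hA _ _ i).trans_lt (hk i)

end Norm

theorem exists_pow_succ_apply_pos {P : Matrix n n ℝ} (hP : P ∈ rowStochastic ℝ n)
    (hirr : ∀ i j, ∃ k, 0 < (P ^ k) i j) (i j : n) : ∃ k, 0 < (P ^ (k + 1)) i j := by
  obtain ⟨l, -, hl⟩ := exists_lt_of_sum_lt (f := 0) (g := P i) (s := univ)
    (by simp [sum_row_of_mem_rowStochastic hP])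
  obtain ⟨k, hk⟩ := hirr l j
  refine ⟨k, ?_⟩
  rw [pow_succ', mul_apply]
  exact (mul_pos hl hk).trans_le <| single_le_sum (f := fun m => P i m * (P ^ k) m j)
    (fun m _ => mul_nonneg (nonneg_of_mem_rowStochastic hP)
      (pow_apply_nonneg (fun _ _ => nonneg_of_mem_rowStochastic hP) k m j)) (mem_univ l)

theorem sum_pow_succ_killAt_apply_lt_one {P : Matrix n n ℝ} (hP : P ∈ rowStochastic ℝ n)
    {t i : n} {k : ℕ} (hk : 0 < (P ^ (k + 1)) i t) : ∑ j, (killAt P t ^ (k + 1)) i j < 1 := by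
  calc ∑ j, (killAt P t ^ (k + 1)) i j ≤ ∑ j, killAt (P ^ (k + 1)) t i j :=
        sum_le_sum fun j _ =>
          pow_succ_killAt_apply_le (fun _ _ => nonneg_of_mem_rowStochastic hP) t k i j
    _ = 1 - (P ^ (k + 1)) i t := by
        rw [sum_killAt_apply, sum_row_of_mem_rowStochastic (pow_mem hP _)]
    _ < 1 := sub_lt_self 1 hk

theorem summable_pow_killAt {P : Matrix n n ℝ} (hP : P ∈ rowStochastic ℝ n)
    (hirr : ∀ i j, ∃ k, 0 < (P ^ k) i j) (t : n) : Summable (killAt P t ^ ·) :=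
  summable_pow_of_exists_sum_pow_apply_lt_one
    (killAt_mem_substochastic (rowStochastic_le_substochastic hP) t) fun i =>
      have ⟨k, hk⟩ := exists_pow_succ_apply_pos hP hirr i t
      ⟨k + 1, sum_pow_succ_killAt_apply_lt_one hP hk⟩

end Transient

section Green

variable {n : Type*} [Fintype n] [DecidableEq n]

noncomputable def green (A : Matrix n n ℝ) : Matrix n n ℝ :=
  ∑' k, A ^ k

theorem green_apply {A : Matrix n n ℝ} (h : Summable (A ^ ·)) (i j : n) :
    green A i j = ∑' k, (A ^ k) i j := by
  have hi : Summable fun k => (A ^ k) i := Pi.summable.1 h i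
  exact (congrFun (tsum_apply h) j).trans (tsum_apply hi)

theorem green_apply_nonneg {A : Matrix n n ℝ} (hA : ∀ i j, 0 ≤ A i j) (h : Summable (A ^ ·))
    (i j : n) : 0 ≤ green A i j := by
  rw [green_apply h]
  exact tsum_nonneg fun k => pow_apply_nonneg hA k i j

theorem summable_pow_of_le {A B : Matrix n n ℝ} (hA : ∀ i j, 0 ≤ A i j)
    (hAB : ∀ i j, A i j ≤ B i j) (hB : Summable (B ^ ·)) : Summable (A ^ ·) :=
  Pi.summable.2 fun i => Pi.summable.2 fun j =>
    (Pi.summable.1 (Pi.summable.1 hB i) j).of_nonneg_of_le (fun k => pow_apply_nonneg hA k i j)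
      fun k => pow_apply_le_pow_apply hA hAB k i j

theorem green_apply_le_green_apply {A B : Matrix n n ℝ} (hA : ∀ i j, 0 ≤ A i j)
    (hAB : ∀ i j, A i j ≤ B i j) (hB : Summable (B ^ ·)) (i j : n) :
    green A i j ≤ green B i j := by
  have hA' := summable_pow_of_le hA hAB hB
  rw [green_apply hA', green_apply hB]
  exact (Pi.summable.1 (Pi.summable.1 hA' i) j).tsum_le_tsum (pow_apply_le_pow_apply hA hAB · i j)
    (Pi.summable.1 (Pi.summable.1 hB i) j)

theorem green_apply_eq_add_killAt {A : Matrix n n ℝ} {t : n} (hA : Summable (A ^ ·))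
    (hAt : Summable (killAt A t ^ ·)) (i j : n) :
    green A i j = green (killAt A t) i j + (∑ k, green (killAt A t) i k * A k t) * green A t j := by
  rw [← mul_sub_killAt_mul_apply, ← Matrix.add_apply,
    ← eq_add_mul_sub_mul_of_mul_one_sub_eq_one (gx := green A) (gy := green (killAt A t))
      hA.one_sub_mul_tsum_pow hAt.tsum_pow_mul_one_sub]

theorem sum_green_killAt_mul_apply_le_one {A : Matrix n n ℝ} (hA : A ∈ substochastic ℝ n)
    {t : n} (hAt : Summable (killAt A t ^ ·)) (i : n) :
    ∑ k, green (killAt A t) i k * A k t ≤ 1 := by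
  have hrow (k : n) : A k t ≤ ∑ j, (1 - killAt A t) k j := by
    simp only [sub_apply, sum_sub_distrib, sum_killAt_apply, one_apply, sum_ite_eq, mem_univ,
      if_true]
    linarith [hA.2 k]
  calc ∑ k, green (killAt A t) i k * A k t
      ≤ ∑ k, green (killAt A t) i k * ∑ j, (1 - killAt A t) k j :=
        sum_le_sum fun k _ => mul_le_mul_of_nonneg_left (hrow k)
          (green_apply_nonneg (killAt_nonneg hA.1 t) hAt i k)
    _ = ∑ j, (green (killAt A t) * (1 - killAt A t)) i j := (sum_row_mul _ _ i).symm
    _ = 1 := by simp [green, hAt.tsum_pow_mul_one_sub, one_apply]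

end Green

end Matrix

open Matrix

theorem visitsBefore_eq_green_apply {V : Type*} [Fintype V] [DecidableEq V]
    {P : Matrix V V ℝ} {t : V} (h : Summable (killAt P t ^ ·)) (v s : V) :
    visitsBefore P v s t = green (killAt P t) s v :=
  (green_apply h s v).symm

/-- Triangle inequality for expected visit counts in a finite irreducible
Markov chain: `H_v(s,t) ≤ H_v(s,u) + H_v(u,t)`. -/
theorem stmt4 {V : Type*} [Fintype V] [DecidableEq V]
    (P : Matrix V V ℝ) (hP0 : ∀ a b, 0 ≤ P a b) (hP1 : ∀ a, ∑ b, P a b = 1)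
    (hirr : ∀ a b : V, ∃ n : ℕ, 0 < (P ^ n) a b)
    (v s t u : V) :
    visitsBefore P v s t ≤ visitsBefore P v s u + visitsBefore P v u t := by
  have hP : P ∈ rowStochastic ℝ V := mem_rowStochastic_iff_sum.2 ⟨hP0, hP1⟩
  have hsum := summable_pow_killAt hP hirr
  set K := killAt P t
  have hK : K ∈ substochastic ℝ V := killAt_mem_substochastic (rowStochastic_le_substochastic hP) t
  have hKu : Summable (killAt K u ^ ·) :=
    summable_pow_of_le (killAt_nonneg hK.1 u) (killAt_le hK.1 u) (hsum t)
  rw [visitsBefore_eq_green_apply (hsum t), visitsBefore_eq_green_apply (hsum u),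
    visitsBefore_eq_green_apply (hsum t), green_apply_eq_add_killAt (hsum t) hKu s v]
  gcongr ?_ + ?_
  · exact green_apply_le_green_apply (killAt_nonneg hK.1 u) (killAt_mono (killAt_le hP0 t) u)
      (hsum u) s v
  · exact mul_le_of_le_one_left (green_apply_nonneg hK.1 (hsum t) u v)
      (sum_green_killAt_mul_apply_le_one hK hKu s)
end

section
/- Let G be a finite strongly connected weighted directed Eulerian graph and let s, t, v be vertices with an edge e = (s,t) of weight w(s,t) > 0. Then the expected number of visits to v by a random walk started at s before first hitting t is at most deg(v)/w(s,t). -/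
open Finset Matrix

section Substochastic

variable {V : Type*} [DecidableEq V]

def killCol (M : Matrix V V ℝ) (t : V) : Matrix V V ℝ :=
  of fun a b => if b = t then 0 else M a b

lemma killCol_nonneg {M : Matrix V V ℝ} (h0 : ∀ a b, 0 ≤ M a b) (t a b : V) :
    0 ≤ killCol M t a b := by
  simp only [killCol, of_apply]
  split_ifs
  exacts [le_rfl, h0 a b]

variable [Fintype V] {M : Matrix V V ℝ}

lemma sum_killCol_apply (t a : V) : ∑ b, killCol M t a b = ∑ b, M a b - M a t := by
  simp [killCol, sum_ite, filter_ne', sum_erase_eq_sub]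

lemma sum_range_pow_apply_le_diag (h0 : ∀ a b, 0 ≤ M a b) (h1 : ∀ a, ∑ b, M a b ≤ 1)
    (s : V) (N : ℕ) (x : V) : ∑ n ∈ range N, (M ^ n) x s ≤ ∑ n ∈ range N, (M ^ n) s s := by
  induction N generalizing x with
  | zero => simp
  | succ N ih =>
    rcases eq_or_ne x s with rfl | hxs
    · rfl
    have hG : 0 ≤ ∑ n ∈ range N, (M ^ n) s s :=
      sum_nonneg fun n _ => pow_apply_nonneg h0 n s s
    calc ∑ n ∈ range (N + 1), (M ^ n) x s
        = ∑ a, M x a * ∑ n ∈ range N, (M ^ n) a s := by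
          simp only [sum_range_succ', pow_succ', mul_apply, mul_sum, pow_zero, one_apply_ne hxs,
            add_zero]
          exact sum_comm
      _ ≤ ∑ a, M x a * ∑ n ∈ range N, (M ^ n) s s :=
          sum_le_sum fun a _ => mul_le_mul_of_nonneg_left (ih a) (h0 x a)
      _ ≤ ∑ n ∈ range N, (M ^ n) s s := by
          rw [← sum_mul]
          exact mul_le_of_le_one_left hG (h1 x)
      _ ≤ ∑ n ∈ range (N + 1), (M ^ n) s s :=
          sum_le_sum_of_subset_of_nonneg (range_subset_range.2 N.le_succ)
            fun n _ _ => pow_apply_nonneg h0 n s s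

lemma sum_range_killCol_pow_mul_apply_le_one (h0 : ∀ a b, 0 ≤ M a b)
    (h1 : ∀ a, ∑ b, M a b ≤ 1) (t : V) (N : ℕ) (x : V) :
    ∑ n ∈ range N, (killCol M t ^ n * M) x t ≤ 1 := by
  induction N generalizing x with
  | zero => simp
  | succ N ih =>
    calc ∑ n ∈ range (N + 1), (killCol M t ^ n * M) x t
        = M x t + ∑ a, killCol M t x a * ∑ n ∈ range N, (killCol M t ^ n * M) a t := by
          simp only [sum_range_succ', pow_succ', Matrix.mul_assoc, mul_apply (M := killCol M t),
            mul_sum, pow_zero, Matrix.one_mul]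
          rw [sum_comm, add_comm]
      _ ≤ M x t + ∑ a, killCol M t x a := by
          gcongr with a
          exact mul_le_of_le_one_right (killCol_nonneg h0 t x a) (ih a)
      _ ≤ 1 := by
          rw [sum_killCol_apply]
          linarith [h1 x]

lemma sum_range_killCol_pow_apply_diag_mul_le_one (h0 : ∀ a b, 0 ≤ M a b)
    (h1 : ∀ a, ∑ b, M a b ≤ 1) (s t : V) (N : ℕ) :
    (∑ n ∈ range N, (killCol M t ^ n) s s) * M s t ≤ 1 := by
  refine le_trans ?_ (sum_range_killCol_pow_mul_apply_le_one h0 h1 t N s)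
  rw [sum_mul]
  refine sum_le_sum fun n _ => ?_
  rw [mul_apply]
  exact single_le_sum (f := fun a => (killCol M t ^ n) s a * M a t)
    (fun a _ => mul_nonneg (pow_apply_nonneg (killCol_nonneg h0 t) n s a) (h0 a t)) (mem_univ s)

end Substochastic

section Reversal

variable {V : Type*} [Fintype V] [DecidableEq V] {Q R : Matrix V V ℝ} {d : V → ℝ}

lemma mul_pow_apply_eq_of_balance (h : ∀ a b, d a * Q a b = d b * R b a) (n : ℕ) (a b : V) :
    d a * (Q ^ n) a b = d b * (R ^ n) b a := by
  induction n generalizing a b with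
  | zero => by_cases hab : a = b <;> simp [one_apply, hab, eq_comm]
  | succ n ih =>
    calc d a * (Q ^ (n + 1)) a b
        = ∑ c, d a * Q a c * (Q ^ n) c b := by rw [pow_succ', mul_apply, mul_sum]; simp [mul_assoc]
      _ = ∑ c, R c a * (d c * (Q ^ n) c b) := by congr! 1 with c; rw [h]; ring
      _ = d b * (R ^ (n + 1)) b a := by
          simp only [ih, pow_succ, mul_apply, mul_sum]
          exact sum_congr rfl fun c _ => by ring

lemma sum_range_pow_apply_le_of_balance (hR0 : ∀ a b, 0 ≤ R a b) (hR1 : ∀ a, ∑ b, R a b ≤ 1)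
    (h : ∀ a b, d a * Q a b = d b * R b a) {s : V} (hs : 0 < d s) {v : V} (hv : 0 ≤ d v)
    (N : ℕ) : ∑ n ∈ range N, (Q ^ n) s v ≤ d v / d s * ∑ n ∈ range N, (Q ^ n) s s := by
  have hQR : ∀ n a, (Q ^ n) s a = d a / d s * (R ^ n) a s := fun n a => by
    rw [div_mul_eq_mul_div, eq_div_iff hs.ne', mul_comm, mul_pow_apply_eq_of_balance h]
  have hdiag : ∀ n, (R ^ n) s s = (Q ^ n) s s := fun n => by
    simpa [hs.ne'] using (hQR n s).symm
  calc ∑ n ∈ range N, (Q ^ n) s v = d v / d s * ∑ n ∈ range N, (R ^ n) v s := by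
        simp only [hQR, mul_sum]
    _ ≤ d v / d s * ∑ n ∈ range N, (R ^ n) s s := by
        gcongr ?_ * ?_
        exact sum_range_pow_apply_le_diag hR0 hR1 s N v
    _ = d v / d s * ∑ n ∈ range N, (Q ^ n) s s := by simp only [hdiag]

end Reversal

lemma exists_reversal_killCol {V : Type*} [Fintype V] [DecidableEq V] {w : V → V → ℝ}
    {deg : V → ℝ} {P : Matrix V V ℝ} (hw : ∀ a b, 0 ≤ w a b) (hdegpos : ∀ v, 0 < deg v)
    (heul : ∀ v, ∑ u, w u v = deg v) (hP : ∀ a b, P a b = w a b / deg a) (t : V) :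
    ∃ R : Matrix V V ℝ, (∀ a b, 0 ≤ R a b) ∧ (∀ a, ∑ b, R a b ≤ 1) ∧
      ∀ a b, deg a * killCol P t a b = deg b * R b a := by
  refine ⟨of fun b a => if b = t then 0 else w a b / deg b, fun b a => ?_, fun b => ?_,
    fun a b => ?_⟩
  · simp only [of_apply]
    split_ifs
    exacts [le_rfl, div_nonneg (hw a b) (hdegpos b).le]
  · by_cases hb : b = t
    · simp [hb]
    · simp only [of_apply, hb, if_false, ← sum_div, heul, div_self (hdegpos b).ne', le_refl]
  · by_cases hb : b = t
    · simp [killCol, hb]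
    · simp only [killCol, of_apply, hb, if_false, hP, mul_div_cancel₀ _ (hdegpos _).ne']

theorem stmt7_general {V : Type*} [Fintype V] [DecidableEq V]
    (w : V → V → ℝ) (hw : ∀ a b, 0 ≤ w a b)
    (deg : V → ℝ) (hdeg : ∀ v, deg v = ∑ u, w v u) (hdegpos : ∀ v, 0 < deg v)
    (heul : ∀ v, ∑ u, w u v = deg v)
    (P : Matrix V V ℝ) (hP : ∀ a b, P a b = w a b / deg a)
    (v s t : V) (hst : 0 < w s t) :
    visitsBefore P v s t ≤ deg v / w s t := by
  have hP0 : ∀ a b, 0 ≤ P a b := fun a b => hP a b ▸ div_nonneg (hw a b) (hdegpos a).le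
  have hP1 : ∀ a, ∑ b, P a b ≤ 1 := fun a => by
    simp only [hP, ← sum_div, ← hdeg, div_self (hdegpos a).ne', le_refl]
  obtain ⟨R, hR0, hR1, hbal⟩ := exists_reversal_killCol hw hdegpos heul hP t
  have hesc : ∀ N, (∑ n ∈ range N, (killCol P t ^ n) s s) * (w s t / deg s) ≤ 1 :=
    hP s t ▸ sum_range_killCol_pow_apply_diag_mul_le_one hP0 hP1 s t
  show ∑' n, (killCol P t ^ n) s v ≤ _
  refine Real.tsum_le_of_sum_range_le (pow_apply_nonneg (killCol_nonneg hP0 t) · s v) fun N => ?_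
  calc ∑ n ∈ range N, (killCol P t ^ n) s v
      ≤ deg v / deg s * ∑ n ∈ range N, (killCol P t ^ n) s s :=
        sum_range_pow_apply_le_of_balance hR0 hR1 hbal (hdegpos s) (hdegpos v).le N
    _ ≤ deg v / deg s * (deg s / w s t) := by
        gcongr
        · exact div_nonneg (hdegpos v).le (hdegpos s).le
        · rw [le_div_iff₀ hst, ← div_le_one (hdegpos s), mul_div_assoc]
          exact hesc N
    _ = deg v / w s t := div_mul_div_cancel₀ (hdegpos s).ne'

/-- In a finite strongly connected weighted directed Eulerian graph with an
edge `(s,t)` of weight `w s t > 0`, the expected number of visits to `v` by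
the natural random walk started at `s` before first hitting `t` is at most
`deg v / w s t`. -/
theorem stmt7 {V : Type*} [Fintype V] [DecidableEq V]
    (w : V → V → ℝ) (hw : ∀ a b, 0 ≤ w a b)
    (hconn : ∀ u v : V, Relation.ReflTransGen (fun a b => 0 < w a b) u v)
    (deg : V → ℝ) (hdeg : ∀ v, deg v = ∑ u, w v u) (hdegpos : ∀ v, 0 < deg v)
    (heul : ∀ v, ∑ u, w u v = deg v)
    (P : Matrix V V ℝ) (hP : ∀ a b, P a b = w a b / deg a)
    (v s t : V) (hst : 0 < w s t) :
    visitsBefore P v s t ≤ deg v / w s t :=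
  stmt7_general w hw deg hdeg hdegpos heul P hP v s t hst
end

section
/- Let X_0, X_1, ... be a random walk on a finite Eulerian weighted digraph started at s, let τ be the cover time (the first time every vertex has been visited), and suppose the graph on n vertices is strongly connected by edges of weight at least w_c. Then the expected number of visits to s before time τ is at most n²·deg(s)/w_c. -/
/-!
Let `φ t v` be the expected hitting time of `t` from `v` and `D = ∑ deg`. Since `deg` is
stationary, Kac's formula gives `deg t * (1 + ∑ u, P t u * φ t u) = D`, so an edge `a → b` of
weight `≥ w_c` forces `φ a b ≤ D / w_c`. With the triangle inequality
`φ t v ≤ φ m v + φ t m` this bounds `φ s t` and `φ t s` by `D / w_c` times the heavy-edge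
distance from `s` to `t`, resp. from `t` to `s`; and the distances from a fixed vertex sum to at
most `n (n - 1) / 2`, since every level below a vertex's distance is inhabited.

On the other side, `G t v = deg s / D * (φ t v + φ s t - φ s v)` is the expected number of visits
to `s` before hitting `t`. Covering `V` from `(v, A)` requires hitting every `t ∉ A`, so
`∑ t ∉ A, G t v` dominates the expected number of visits to `s` before cover; from `(s, {s})`
this is at most `deg s / D * ∑ t, (φ t s + φ s t) ≤ n ^ 2 * deg s / w_c`.
-/

/-- The kernel of the Markov chain that tracks the current vertex together with
the set of vertices visited so far. -/
noncomputable def coverKernel {V : Type*} [Fintype V] [DecidableEq V]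
    (P : Matrix V V ℝ) : Matrix (V × Finset V) (V × Finset V) ℝ :=
  Matrix.of fun p q => if q.2 = insert q.1 p.2 then P p.1 q.1 else 0

/-- `visitsBeforeCover P s v` is the expected number of times `n ≥ 0` at which
the chain started at `s` is at `v` while not all vertices have been visited
yet, i.e. the expected number of visits to `v` strictly before the cover
time `τ`. -/
noncomputable def visitsBeforeCover {V : Type*} [Fintype V] [DecidableEq V]
    (P : Matrix V V ℝ) (s v : V) : ℝ :=
  ∑' n : ℕ, ∑ A ∈ Finset.univ.filter (fun A : Finset V => A ≠ Finset.univ),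
    ((coverKernel P) ^ n) (s, {s}) (v, A)

open Finset Matrix

section Levels

variable {V : Type*} [Fintype V]

theorem two_mul_sum_card_filter_lt_le [DecidableEq V] {α : Type*} [LinearOrder α] (f : V → α) :
    2 * ∑ v, #{u | f u < f v} ≤ Fintype.card V * (Fintype.card V - 1) := by
  have hpair : ∀ u v : V, ((if f u < f v then 1 else 0) + if f v < f u then 1 else 0)
      ≤ if u = v then 0 else 1 := by
    intro u v
    by_cases huv : u = v
    · simp [huv]
    · have := lt_asymm (a := f u) (b := f v)
      split_ifs <;> simp_all
  calc 2 * ∑ v, #{u | f u < f v}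
      = ∑ v, ∑ u, ((if f u < f v then 1 else 0) + if f v < f u then 1 else 0) := by
        simp only [card_filter, sum_add_distrib]
        rw [sum_comm (f := fun v u => if f v < f u then 1 else 0)]
        ring
    _ ≤ ∑ v : V, ∑ u : V, if u = v then 0 else 1 := by
        gcongr with v _ u _
        exact hpair u v
    _ = Fintype.card V * (Fintype.card V - 1) := by
        simp [sum_ite, filter_ne', card_erase_of_mem]

theorem le_card_filter_lt (d : V → ℕ) (hd : ∀ v, d v ≠ 0 → ∃ u, d u + 1 = d v) (v : V) :
    d v ≤ #{u | d u < d v} := by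
  have hlevels : ∀ k v, d v = k → ∀ j ≤ k, ∃ u, d u = j := by
    intro k
    induction k with
    | zero => exact fun v hv j hj => ⟨v, by omega⟩
    | succ k ih =>
      intro v hv j hj
      rcases hj.lt_or_eq with hj | rfl
      · obtain ⟨u, hu⟩ := hd v (by omega)
        exact ih u (by omega) j (by omega)
      · exact ⟨v, hv⟩
  simpa using card_le_card_of_surjOn d (s := {u | d u < d v}) (t := range (d v)) fun j hj => by
    obtain ⟨u, hu⟩ := hlevels (d v) v rfl j (by simp at hj; omega)
    exact ⟨u, by simp [hu]; simpa using hj, hu⟩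

end Levels

section Dist

variable {V : Type*}

def reachableIn (R : V → V → Prop) (s : V) : ℕ → V → Prop
  | 0 => (· = s)
  | k + 1 => fun v => ∃ u, reachableIn R s k u ∧ R u v

theorem exists_reachableIn {R : V → V → Prop} {s v : V} (h : Relation.ReflTransGen R s v) :
    ∃ k, reachableIn R s k v := by
  induction h with
  | refl => exact ⟨0, rfl⟩
  | tail _ huv ih =>
    obtain ⟨k, hk⟩ := ih
    exact ⟨k + 1, _, hk, huv⟩

theorem exists_dist [Fintype V] {R : V → V → Prop} {s : V}
    (hconn : ∀ v, Relation.ReflTransGen R s v) :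
    ∃ d : V → ℕ, d s = 0 ∧ ∀ v, v ≠ s → ∃ u, R u v ∧ d u + 1 = d v := by
  classical
  have h := fun v => exists_reachableIn (hconn v)
  refine ⟨fun v => Nat.find (h v), (Nat.find_eq_zero _).2 rfl, fun v hv => ?_⟩
  obtain ⟨m, hm⟩ : ∃ m, Nat.find (h v) = m + 1 := Nat.exists_eq_add_one.2 <|
    Nat.pos_of_ne_zero fun h0 => hv (by simpa [h0, reachableIn] using Nat.find_spec (h v))
  have hspec := Nat.find_spec (h v)
  rw [hm] at hspec
  obtain ⟨u, hu, huv⟩ := hspec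
  refine ⟨u, huv, le_antisymm ?_ ?_⟩
  · dsimp only
    have := Nat.find_min' (h u) hu
    omega
  · exact Nat.find_min' (h v) ⟨u, Nat.find_spec (h u), huv⟩

theorem two_mul_sum_le_of_le_add [Fintype V] [DecidableEq V] {R : V → V → Prop} {s : V}
    (hconn : ∀ v, Relation.ReflTransGen R s v) {ψ : V → ℝ} {c : ℝ} (hc : 0 ≤ c) (hs : ψ s ≤ 0)
    (hstep : ∀ u v, R u v → ψ v ≤ ψ u + c) :
    2 * ∑ v, ψ v ≤ Fintype.card V * (Fintype.card V - 1 : ℕ) * c := by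
  obtain ⟨d, hds, hpred⟩ := exists_dist hconn
  have hψ : ∀ k v, d v = k → ψ v ≤ k * c := by
    intro k
    induction k with
    | zero =>
      intro v hv
      by_cases hvs : v = s
      · simpa [hvs] using hs
      · obtain ⟨u, -, hu⟩ := hpred v hvs
        omega
    | succ k ih =>
      intro v hv
      obtain ⟨u, huv, hu⟩ := hpred v (by rintro rfl; omega)
      have := ih u (by omega)
      have := hstep u v huv
      push_cast
      linarith
  have hd : ∀ v, d v ≠ 0 → ∃ u, d u + 1 = d v := fun v hv =>
    (hpred v (by rintro rfl; exact hv hds)).imp fun _ => And.right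
  have hsum : 2 * ∑ v, d v ≤ Fintype.card V * (Fintype.card V - 1) :=
    (Nat.mul_le_mul_left 2 (sum_le_sum fun v _ => le_card_filter_lt d hd v)).trans
      (two_mul_sum_card_filter_lt_le d)
  calc 2 * ∑ v, ψ v ≤ 2 * ∑ v, (d v : ℝ) * c := by gcongr with v; exact hψ _ v rfl
    _ = ((2 * ∑ v, d v : ℕ) : ℝ) * c := by push_cast; rw [mul_assoc, sum_mul]
    _ ≤ _ := by gcongr; exact_mod_cast hsum

end Dist

section HittingTime

variable {V : Type*} [Fintype V]

structure IsHittingTime (P : Matrix V V ℝ) (t : V) (φ : V → ℝ) : Prop where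
  apply_self : φ t = 0
  apply_of_ne : ∀ v, v ≠ t → φ v = 1 + ∑ u, P v u * φ u

variable [DecidableEq V] {P : Matrix V V ℝ} {R : V → V → Prop}

theorem nonneg_of_sum_mul_le (hP : P ∈ rowStochastic ℝ V) (hR : ∀ u v, R u v → 0 < P u v)
    {x : V} (hconn : ∀ v, Relation.ReflTransGen R v x) {ρ : V → ℝ} (hx : 0 ≤ ρ x)
    (hsup : ∀ v, v ≠ x → ∑ u, P v u * ρ u ≤ ρ v) (v : V) : 0 ≤ ρ v := by
  obtain ⟨v₀, -, hmin⟩ := exists_min_image univ ρ ⟨x, mem_univ x⟩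
  -- a minimiser `a ≠ x` is an average of values `≥ ρ v₀`, so its `R`-successors are minimisers
  have hclosed : ∀ a b, R a b → a ≠ x → ρ a = ρ v₀ → ρ b = ρ v₀ := by
    intro a b hab hax ha
    have hterms : ∀ u ∈ univ, 0 ≤ P a u * (ρ u - ρ v₀) := fun u hu =>
      mul_nonneg (nonneg_of_mem_rowStochastic hP) (sub_nonneg.2 (hmin u hu))
    have hsum : ∑ u, P a u * (ρ u - ρ v₀) ≤ 0 := by
      simp only [mul_sub, sum_sub_distrib, ← sum_mul, sum_row_of_mem_rowStochastic hP, one_mul]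
      linarith [hsup a hax]
    have hb := (sum_eq_zero_iff_of_nonneg hterms).1 (le_antisymm hsum (sum_nonneg hterms)) b
      (mem_univ b)
    rcases mul_eq_zero.1 hb with h | h
    · exact absurd h (hR a b hab).ne'
    · linarith
  have hreach : ∀ a, Relation.ReflTransGen R a x → ρ a = ρ v₀ → ρ x = ρ v₀ := by
    intro a ha
    induction ha using Relation.ReflTransGen.head_induction_on with
    | refl => exact id
    | @head a b hab _ ih =>
      intro h
      by_cases hax : a = x
      · rwa [← hax]
      · exact ih (hclosed a b hab hax h)
  linarith [hreach v₀ (hconn v₀) rfl, hmin v (mem_univ v)]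

theorem exists_isHittingTime (hP : P ∈ rowStochastic ℝ V) (hR : ∀ u v, R u v → 0 < P u v)
    {t : V} (hconn : ∀ v, Relation.ReflTransGen R v t) : ∃ φ, IsHittingTime P t φ := by
  -- `P` with its row `t` deleted: the hitting equations read `(1 - Q) *ᵥ φ = 1 - single t 1`
  set Q : Matrix V V ℝ := of fun v u => if v = t then 0 else P v u
  have hQ : ∀ f v, (Q *ᵥ f) v = if v = t then 0 else ∑ u, P v u * f u := by
    intro f v
    split_ifs with hv <;> simp [Q, mulVec, dotProduct, hv]
  have hinj : Function.Injective (1 - Q).mulVecLin := by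
    rw [← LinearMap.ker_eq_bot, LinearMap.ker_eq_bot']
    intro f hf
    have hfix : ∀ v, f v = (Q *ᵥ f) v := fun v => by
      simpa [sub_mulVec, sub_eq_zero] using congrFun hf v
    have hft : f t = 0 := by simpa [hQ] using hfix t
    have hharm : ∀ v, v ≠ t → ∑ u, P v u * f u = f v := fun v hv => by
      simp [hfix v, hQ, hv]
    funext v
    refine le_antisymm ?_ (nonneg_of_sum_mul_le hP hR hconn hft.ge (fun v hv => (hharm v hv).le) v)
    refine neg_nonneg.1 (nonneg_of_sum_mul_le (ρ := fun u => -f u) hP hR hconn (by simp [hft])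
      (fun v hv => ?_) v)
    simp only [mul_neg, sum_neg_distrib, hharm v hv, le_refl]
  obtain ⟨φ, hφ⟩ := LinearMap.injective_iff_surjective.1 hinj fun v => if v = t then 0 else 1
  have hφ : ∀ v, φ v - (Q *ᵥ φ) v = if v = t then 0 else 1 := fun v => by
    simpa [sub_mulVec] using congrFun hφ v
  refine ⟨φ, by simpa [hQ] using hφ t, fun v hv => ?_⟩
  have := hφ v
  simp only [hQ, hv, if_false] at this
  linarith

namespace IsHittingTime

variable {t : V} {φ : V → ℝ}

theorem nonneg (hφ : IsHittingTime P t φ) (hP : P ∈ rowStochastic ℝ V)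
    (hR : ∀ u v, R u v → 0 < P u v) (hconn : ∀ v, Relation.ReflTransGen R v t) (v : V) :
    0 ≤ φ v :=
  nonneg_of_sum_mul_le hP hR hconn hφ.apply_self.ge
    (fun v hv => by linarith [hφ.apply_of_ne v hv]) v

theorem sub_one_le_sum (hφ : IsHittingTime P t φ) (hP : P ∈ rowStochastic ℝ V)
    (hR : ∀ u v, R u v → 0 < P u v) (hconn : ∀ v, Relation.ReflTransGen R v t) (v : V) :
    φ v - 1 ≤ ∑ u, P v u * φ u := by
  by_cases hv : v = t
  · subst hv
    have : 0 ≤ ∑ u, P v u * φ u := sum_nonneg fun u _ =>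
      mul_nonneg (nonneg_of_mem_rowStochastic hP) (hφ.nonneg hP hR hconn u)
    linarith [hφ.apply_self]
  · linarith [hφ.apply_of_ne v hv]

theorem le_add {m : V} {ψ : V → ℝ} (hφ : IsHittingTime P t φ) (hψ : IsHittingTime P m ψ)
    (hP : P ∈ rowStochastic ℝ V) (hR : ∀ u v, R u v → 0 < P u v)
    (hconn : ∀ u v, Relation.ReflTransGen R u v) (v : V) : φ v ≤ ψ v + φ m := by
  suffices 0 ≤ ψ v + φ m - φ v by linarith
  refine nonneg_of_sum_mul_le (ρ := fun u => ψ u + φ m - φ u) hP hR (fun v => hconn v m)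
    (by rw [hψ.apply_self, zero_add, sub_self]) (fun x hx => ?_) v
  have hsum : ∑ u, P x u * (ψ u + φ m - φ u) = ∑ u, P x u * ψ u + φ m - ∑ u, P x u * φ u := by
    simp only [mul_sub, mul_add, sum_sub_distrib, sum_add_distrib, ← sum_mul,
      sum_row_of_mem_rowStochastic hP, one_mul]
  rw [hsum]
  linarith [hψ.apply_of_ne x hx, hφ.sub_one_le_sum hP hR (fun v => hconn v t) x]

theorem mul_one_add_sum_eq {μ : V → ℝ} (hφ : IsHittingTime P t φ)
    (hμ : ∀ u, ∑ v, μ v * P v u = μ u) : μ t * (1 + ∑ u, P t u * φ u) = ∑ v, μ v := by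
  have hrow : ∀ v, μ v * ∑ u, P v u * φ u
      = μ v * φ v - μ v + if v = t then μ t * (1 + ∑ u, P t u * φ u) else 0 := by
    intro v
    split_ifs with hv
    · subst hv; rw [hφ.apply_self]; ring
    · rw [hφ.apply_of_ne v hv]; ring
  have hswap : ∑ v, μ v * ∑ u, P v u * φ u = ∑ u, μ u * φ u := by
    simp only [mul_sum, ← mul_assoc]
    rw [sum_comm]
    simp only [← sum_mul, hμ]
  calc μ t * (1 + ∑ u, P t u * φ u)
      = ∑ v, μ v * ∑ u, P v u * φ u - ∑ v, μ v * φ v + ∑ v, μ v := by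
        simp only [hrow, sum_add_distrib, sum_sub_distrib, sum_ite_eq', mem_univ, if_true]
        ring
    _ = ∑ v, μ v := by rw [hswap, sub_self, zero_add]

theorem mul_mul_le {μ : V → ℝ} (hφ : IsHittingTime P t φ) (hP : P ∈ rowStochastic ℝ V)
    (hR : ∀ u v, R u v → 0 < P u v) (hconn : ∀ v, Relation.ReflTransGen R v t)
    (hμ : ∀ u, ∑ v, μ v * P v u = μ u) (hμt : 0 ≤ μ t) (b : V) :
    μ t * P t b * φ b ≤ ∑ v, μ v - μ t := by
  have hb : P t b * φ b ≤ ∑ u, P t u * φ u :=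
    single_le_sum (f := fun u => P t u * φ u)
      (fun u _ => mul_nonneg (nonneg_of_mem_rowStochastic hP) (hφ.nonneg hP hR hconn u))
      (mem_univ b)
  rw [← hφ.mul_one_add_sum_eq hμ, mul_assoc]
  nlinarith

end IsHittingTime

theorem sum_hittingTime_add_le (hP : P ∈ rowStochastic ℝ V) (hR : ∀ u v, R u v → 0 < P u v)
    (hconn : ∀ u v, Relation.ReflTransGen R u v) {φ : V → V → ℝ}
    (hφ : ∀ t, IsHittingTime P t (φ t)) {c : ℝ} (hc : 0 ≤ c) (hedge : ∀ a b, R a b → φ a b ≤ c)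
    (s : V) : ∑ t, (φ t s + φ s t) ≤ Fintype.card V * (Fintype.card V - 1 : ℕ) * c := by
  have hout := two_mul_sum_le_of_le_add (hconn s) hc (hφ s).apply_self.le fun u v huv => by
    linarith [(hφ s).le_add (hφ u) hP hR hconn v, hedge u v huv]
  have hin := two_mul_sum_le_of_le_add (ψ := fun t => φ t s) (fun v => (hconn v s).swap) hc
    (hφ s).apply_self.le fun u v huv => by
      linarith [(hφ v).le_add (hφ u) hP hR hconn s, hedge v u huv]
  rw [sum_add_distrib]
  linarith

end HittingTime

theorem tsum_pow_mulVec_le {ι : Type*} [Fintype ι] [DecidableEq ι] {K : Matrix ι ι ℝ}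
    (hK : ∀ p q, 0 ≤ K p q) {S : Set ι} {x : ι} (hx : x ∈ S)
    (hS : ∀ p q, p ∈ S → K p q ≠ 0 → q ∈ S) {g f : ι → ℝ} (hg : 0 ≤ g) (hf : 0 ≤ f)
    (hgf : ∀ p ∈ S, g p + (K *ᵥ f) p ≤ f p) :
    ∑' n, (K ^ n *ᵥ g) x ≤ f x := by
  have hnonneg : ∀ n (h : ι → ℝ), 0 ≤ h → 0 ≤ (K ^ n *ᵥ h) x := fun n h hh =>
    sum_nonneg fun p _ => mul_nonneg (pow_apply_nonneg hK n x p) (hh p)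
  have hsupp : ∀ n p, p ∉ S → (K ^ n) x p = 0 := by
    intro n
    induction n with
    | zero => exact fun p hp => one_apply_ne (by rintro rfl; exact hp hx)
    | succ n ih =>
      intro q hq
      rw [pow_succ, mul_apply]
      refine sum_eq_zero fun p _ => ?_
      by_cases hp : p ∈ S
      · rw [not_imp_comm.1 (hS p q hp) hq, mul_zero]
      · rw [ih p hp, zero_mul]
  have hstep : ∀ n, (K ^ n *ᵥ g) x + (K ^ (n + 1) *ᵥ f) x ≤ (K ^ n *ᵥ f) x := by
    intro n
    rw [pow_succ, ← mulVec_mulVec]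
    simp only [mulVec, dotProduct, ← sum_add_distrib, ← mul_add]
    refine sum_le_sum fun p _ => ?_
    by_cases hp : p ∈ S
    · exact mul_le_mul_of_nonneg_left (hgf p hp) (pow_apply_nonneg hK n x p)
    · simp [hsupp n p hp]
  have hpartial : ∀ N, ∑ n ∈ range N, (K ^ n *ᵥ g) x + (K ^ N *ᵥ f) x ≤ f x := by
    intro N
    induction N with
    | zero => simp
    | succ N ih => rw [sum_range_succ]; linarith [hstep N]
  exact Real.tsum_le_of_sum_range_le (fun n => hnonneg n g hg)
    fun N => by linarith [hpartial N, hnonneg N f hf]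

section CoverKernel

variable {V : Type*} [Fintype V] [DecidableEq V] {P : Matrix V V ℝ}

theorem coverKernel_nonneg (hP : ∀ a b, 0 ≤ P a b) (p q : V × Finset V) :
    0 ≤ coverKernel P p q := by
  simp only [coverKernel, of_apply]
  split_ifs
  exacts [hP _ _, le_rfl]

theorem coverKernel_mulVec (f : V × Finset V → ℝ) (p : V × Finset V) :
    (coverKernel P *ᵥ f) p = ∑ u, P p.1 u * f (u, insert u p.2) := by
  simp only [mulVec, dotProduct, Fintype.sum_prod_type]
  refine sum_congr rfl fun u _ => ?_
  simp [coverKernel, ite_mul]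

theorem add_coverKernel_mulVec_le (hP : ∀ a b, 0 ≤ P a b) {s : V} {G : V → V → ℝ}
    (hG0 : ∀ t v, 0 ≤ G t v)
    (hG : ∀ t v, v ≠ t → G t v = (if v = s then 1 else 0) + ∑ u, P v u * G t u)
    {v : V} {A : Finset V} (hv : v ∈ A) :
    (if v = s ∧ A ≠ univ then 1 else 0) + (coverKernel P *ᵥ fun p => ∑ t ∈ p.2ᶜ, G t p.1) (v, A)
      ≤ ∑ t ∈ Aᶜ, G t v := by
  have hvisit : (if v = s ∧ A ≠ univ then (1 : ℝ) else 0) ≤ #Aᶜ * if v = s then 1 else 0 := by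
    by_cases hA : A = univ
    · simp only [hA, ne_eq, not_true_eq_false, and_false, if_false]
      positivity
    · have : (1 : ℝ) ≤ #Aᶜ := by
        exact_mod_cast card_pos.2 (nonempty_iff_ne_empty.2 ((compl_eq_empty_iff A).not.2 hA))
      split_ifs <;> simp_all
  rw [coverKernel_mulVec]
  calc (if v = s ∧ A ≠ univ then 1 else 0) + ∑ u, P v u * ∑ t ∈ (insert u A)ᶜ, G t u
      ≤ #Aᶜ * (if v = s then 1 else 0) + ∑ u, P v u * ∑ t ∈ Aᶜ, G t u := by
        gcongr with u _
        · exact hP v u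
        · exact fun t _ _ => hG0 t u
        · exact subset_insert u A
    _ = ∑ t ∈ Aᶜ, ((if v = s then 1 else 0) + ∑ u, P v u * G t u) := by
        rw [sum_add_distrib, sum_const, nsmul_eq_mul, sum_comm]
        simp only [mul_sum]
    _ = ∑ t ∈ Aᶜ, G t v :=
        sum_congr rfl fun t ht => (hG t v (by rintro rfl; exact mem_compl.1 ht hv)).symm

theorem visitsBeforeCover_le_sum (hP : ∀ a b, 0 ≤ P a b) {s : V} {G : V → V → ℝ}
    (hG0 : ∀ t v, 0 ≤ G t v)
    (hG : ∀ t v, v ≠ t → G t v = (if v = s then 1 else 0) + ∑ u, P v u * G t u) :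
    visitsBeforeCover P s s ≤ ∑ t ∈ {s}ᶜ, G t s := by
  have hvisits : visitsBeforeCover P s s = ∑' n, (coverKernel P ^ n *ᵥ
      fun p => if p.1 = s ∧ p.2 ≠ univ then 1 else 0) (s, {s}) := by
    refine tsum_congr fun n => ?_
    simp [mulVec, dotProduct, Fintype.sum_prod_type, sum_filter, ite_and]
  rw [hvisits]
  refine tsum_pow_mulVec_le (coverKernel_nonneg hP) (S := {p | p.1 ∈ p.2})
    (f := fun p => ∑ t ∈ p.2ᶜ, G t p.1) (by simp) (fun p q _ hpq => ?_) (fun p => by positivity)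
    (fun p => sum_nonneg fun t _ => hG0 t p.1) fun p hp => add_coverKernel_mulVec_le hP hG0 hG hp
  simp only [coverKernel, of_apply, ne_eq, ite_eq_right_iff, Classical.not_imp] at hpq
  simp [hpq.1]

end CoverKernel

theorem visitsBeforeCover_le_mul_sum_commute {V : Type*} [Fintype V] [DecidableEq V]
    {P : Matrix V V ℝ} {R : V → V → Prop} (hP : P ∈ rowStochastic ℝ V)
    (hR : ∀ u v, R u v → 0 < P u v) (hconn : ∀ u v, Relation.ReflTransGen R u v)
    {μ : V → ℝ} (hμ : ∀ u, ∑ v, μ v * P v u = μ u) (hμ0 : 0 ≤ μ) {s : V} (hμs : 0 < μ s)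
    {φ : V → V → ℝ} (hφ : ∀ t, IsHittingTime P t (φ t)) :
    visitsBeforeCover P s s ≤ μ s / (∑ v, μ v) * ∑ t, (φ t s + φ s t) := by
  set D := ∑ v, μ v
  have hD : 0 < D := hμs.trans_le (single_le_sum (fun v _ => hμ0 v) (mem_univ s))
  -- `G t v` is the expected number of visits to `s` before hitting `t`, starting from `v`
  set G : V → V → ℝ := fun t v => μ s / D * (φ t v + φ s t - φ s v)
  have hG0 : ∀ t v, 0 ≤ G t v := fun t v => mul_nonneg (by positivity)
    (by linarith [(hφ s).le_add (hφ t) hP hR hconn v])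
  have hG : ∀ t v, v ≠ t → G t v = (if v = s then 1 else 0) + ∑ u, P v u * G t u := by
    intro t v hvt
    have hsum : ∑ u, P v u * G t u
        = μ s / D * (∑ u, P v u * φ t u + φ s t - ∑ u, P v u * φ s u) := by
      simp only [G, mul_sub, mul_add, sum_sub_distrib, sum_add_distrib, ← sum_mul,
        mul_left_comm (P v _), ← mul_sum, sum_row_of_mem_rowStochastic hP, one_mul]
    have ht := (hφ t).apply_of_ne v hvt
    rw [hsum]
    split_ifs with hvs
    · subst hvs
      have hkac : μ v * (1 + ∑ u, P v u * φ v u) = D := (hφ v).mul_one_add_sum_eq hμ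
      simp only [G, (hφ v).apply_self]
      field_simp
      linear_combination μ v * ht + hkac
    · simp only [G]
      linear_combination μ s / D * (ht - (hφ s).apply_of_ne v hvs)
  calc visitsBeforeCover P s s ≤ ∑ t ∈ {s}ᶜ, G t s :=
        visitsBeforeCover_le_sum (fun _ _ => nonneg_of_mem_rowStochastic hP) hG0 hG
    _ ≤ ∑ t, G t s := sum_le_univ_sum_of_nonneg fun t => hG0 t s
    _ = μ s / D * ∑ t, (φ t s + φ s t) := by simp only [G, (hφ s).apply_self, sub_zero, mul_sum]

section WeightedWalk

variable {V : Type*} [Fintype V] {w : V → V → ℝ} {deg : V → ℝ} {P : Matrix V V ℝ}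

theorem mem_rowStochastic_of_eq_div [DecidableEq V] (hw : ∀ a b, 0 ≤ w a b)
    (hdeg : ∀ v, deg v = ∑ u, w v u) (hdegpos : ∀ v, 0 < deg v)
    (hP : ∀ a b, P a b = w a b / deg a) : P ∈ rowStochastic ℝ V :=
  mem_rowStochastic_iff_sum.2 ⟨fun a b => hP a b ▸ div_nonneg (hw a b) (hdegpos a).le,
    fun a => by simp only [hP, ← sum_div, ← hdeg, div_self (hdegpos a).ne']⟩

theorem sum_mul_eq_of_eq_div (hdegpos : ∀ v, 0 < deg v) (heul : ∀ v, ∑ u, w u v = deg v)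
    (hP : ∀ a b, P a b = w a b / deg a) (u : V) : ∑ v, deg v * P v u = deg u := by
  simp only [hP, mul_div_cancel₀ _ (hdegpos _).ne', heul]

end WeightedWalk

/-- In a finite Eulerian weighted digraph on `n` vertices strongly connected by
edges of weight at least `w_c`, the expected number of visits to `s` by the
natural random walk started at `s` before the cover time is at most
`n^2 * deg s / w_c`. -/
theorem stmt9 {V : Type*} [Fintype V] [DecidableEq V]
    (w : V → V → ℝ) (hw : ∀ a b, 0 ≤ w a b)
    (wc : ℝ) (hwc : 0 < wc)
    (hconn : ∀ u v : V, Relation.ReflTransGen (fun a b => wc ≤ w a b) u v)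
    (deg : V → ℝ) (hdeg : ∀ v, deg v = ∑ u, w v u) (hdegpos : ∀ v, 0 < deg v)
    (heul : ∀ v, ∑ u, w u v = deg v)
    (P : Matrix V V ℝ) (hP : ∀ a b, P a b = w a b / deg a)
    (s : V) :
    visitsBeforeCover P s s ≤ (Fintype.card V : ℝ) ^ 2 * deg s / wc := by
  have hstoch := mem_rowStochastic_of_eq_div hw hdeg hdegpos hP
  have hstat := sum_mul_eq_of_eq_div hdegpos heul hP
  have hR : ∀ a b, wc ≤ w a b → 0 < P a b := fun a b h =>
    hP a b ▸ div_pos (hwc.trans_le h) (hdegpos a)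
  choose φ hφ using fun t => exists_isHittingTime hstoch hR fun v => hconn v t
  set D := ∑ v, deg v
  have hD : 0 < D := sum_pos (fun v _ => hdegpos v) ⟨s, mem_univ s⟩
  have hedge : ∀ a b, wc ≤ w a b → φ a b ≤ D / wc := by
    intro a b hab
    have h := (hφ a).mul_mul_le hstoch hR (fun v => hconn v a) hstat (hdegpos a).le b
    rw [hP, mul_div_cancel₀ _ (hdegpos a).ne'] at h
    rw [le_div_iff₀ hwc]
    nlinarith [(hφ a).nonneg hstoch hR (fun v => hconn v a) b, hdegpos a]
  have hn : ((Fintype.card V - 1 : ℕ) : ℝ) ≤ Fintype.card V := by exact_mod_cast Nat.sub_le _ _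
  calc visitsBeforeCover P s s ≤ deg s / D * ∑ t, (φ t s + φ s t) :=
        visitsBeforeCover_le_mul_sum_commute hstoch hR hconn hstat (fun v => (hdegpos v).le)
          (hdegpos s) hφ
    _ ≤ deg s / D * (Fintype.card V * (Fintype.card V - 1 : ℕ) * (D / wc)) :=
        mul_le_mul_of_nonneg_left (sum_hittingTime_add_le hstoch hR hconn hφ
          (div_nonneg hD.le hwc.le) hedge s) (div_nonneg (hdegpos s).le hD.le)
    _ = Fintype.card V * (Fintype.card V - 1 : ℕ) * deg s / wc := by field_simp
    _ ≤ (Fintype.card V : ℝ) ^ 2 * deg s / wc := by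
        rw [sq]
        gcongr
        exact (hdegpos s).le
end

section
/- Let G be a finite weighted digraph with positive weights and let S ⊆ V. The Schur complement graph G_S (with vertex set S, where the edge from u to v has weight deg(u)·P[u → v], P[u → v] being the probability that a random walk at u next returns to S at v, possibly after leaving S) satisfies: if G is Eulerian then G_S is Eulerian, and every vertex of S has the same degree in G_S as in G. -/
/-!
Split `P = A + E`, where `A = avoidMatrix P S` keeps the steps landing outside `S` and
`E = enterMatrix P S` those landing in `S`, so that `hitMatrix P S = (∑ Aⁿ) E`. Since every vertex
reaches `S`, the walk killed on entering `S` dies with positive probability within a bounded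
number of steps from every vertex; hence the row sums of `Aⁿ` decay geometrically and
`∑ Aⁿ = (1 - A)⁻¹`. Out-degrees: `E 1 = (1 - A) 1` because `P 1 = 1`, so `hitMatrix P S 1 = 1`.
In-degrees: `deg` is stationary for the Eulerian walk, so `deg|_S = deg (1 - A)` and
`deg|_S · hitMatrix P S = deg E = deg|_S`.
-/

/-- `hitMatrix P S u v` is the probability that the random walk with transition
matrix `P` currently at `u`, after at least one step, first visits the set `S`
at the vertex `v` (possibly after wandering outside `S`). -/
noncomputable def hitMatrix {V : Type*} [Fintype V] [DecidableEq V]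
    (P : Matrix V V ℝ) (S : Finset V) : Matrix V V ℝ :=
  ∑' n : ℕ,
    (Matrix.of fun a b : V => if b ∈ S then 0 else P a b) ^ n *
      (Matrix.of fun a b : V => if b ∈ S then P a b else 0)

open Finset Filter Matrix

theorem summable_of_le_pow_div {f : ℕ → ℝ} {c : ℝ} {N : ℕ} (hN : 0 < N) (hc0 : 0 ≤ c)
    (hc1 : c < 1) (hf0 : ∀ n, 0 ≤ f n) (hf : ∀ n, f n ≤ c ^ (n / N)) : Summable f := by
  have : NeZero N := ⟨hN.ne'⟩
  have hblocks : Summable fun p : ℕ × Fin N => c ^ p.1 * 1 :=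
    (summable_geometric_of_lt_one hc0 hc1).mul_of_nonneg (summable_of_hasFiniteSupport
      (Set.toFinite _)) (fun _ => pow_nonneg hc0 _) fun _ => zero_le_one
  have hdiv := (Nat.divModEquiv N).summable_iff.2 hblocks
  simp only [Function.comp_def, Nat.divModEquiv_apply, mul_one] at hdiv
  exact .of_nonneg_of_le hf0 hf hdiv

namespace Matrix

variable {V : Type*} [Fintype V] [DecidableEq V]

theorem sum_pow_add_apply {R : Type*} [Semiring R] (Q : Matrix V V R) (m n : ℕ) (a : V) :
    ∑ b, (Q ^ (m + n)) a b = ∑ x, (Q ^ m) a x * ∑ b, (Q ^ n) x b := by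
  simp only [pow_add, mul_apply, mul_sum]
  exact sum_comm

section Substochastic

variable {Q : Matrix V V ℝ} (hQ0 : ∀ a b, 0 ≤ Q a b) (hQ1 : ∀ a, ∑ b, Q a b ≤ 1)
include hQ0 hQ1

theorem antitone_sum_pow_apply (a : V) : Antitone fun n => ∑ b, (Q ^ n) a b := by
  refine antitone_nat_of_succ_le fun n => ?_
  rw [sum_pow_add_apply, pow_one]
  exact sum_le_sum fun x _ => mul_le_of_le_one_right (pow_apply_nonneg hQ0 n a x) (hQ1 x)

theorem sum_pow_apply_le_one (n : ℕ) (a : V) : ∑ b, (Q ^ n) a b ≤ 1 := by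
  simpa [one_apply] using antitone_sum_pow_apply hQ0 hQ1 a (Nat.zero_le n)

theorem sum_pow_one_add_apply_lt_one {u x : V} {n : ℕ} (hux : 0 < Q u x)
    (hx : ∑ b, (Q ^ n) x b < 1) : ∑ b, (Q ^ (1 + n)) u b < 1 := by
  rw [sum_pow_add_apply, pow_one]
  calc ∑ y, Q u y * ∑ b, (Q ^ n) y b
      < ∑ y, Q u y := sum_lt_sum
        (fun y _ => mul_le_of_le_one_right (hQ0 u y) (sum_pow_apply_le_one hQ0 hQ1 n y))
        ⟨x, mem_univ x, mul_lt_of_lt_one_right hux hx⟩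
    _ ≤ 1 := hQ1 u

omit hQ1 in
theorem sum_pow_mul_apply_le_pow {N : ℕ} {c : ℝ} (hc : 0 ≤ c)
    (hN : ∀ a, ∑ b, (Q ^ N) a b ≤ c) (k : ℕ) (a : V) : ∑ b, (Q ^ (k * N)) a b ≤ c ^ k := by
  induction k generalizing a with
  | zero => simp [one_apply]
  | succ k ih =>
    calc ∑ b, (Q ^ ((k + 1) * N)) a b
        = ∑ x, (Q ^ (k * N)) a x * ∑ b, (Q ^ N) x b := by rw [add_one_mul, sum_pow_add_apply]
      _ ≤ ∑ x, (Q ^ (k * N)) a x * c :=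
        sum_le_sum fun x _ => mul_le_mul_of_nonneg_left (hN x) (pow_apply_nonneg hQ0 _ a x)
      _ ≤ c ^ k * c := by rw [← sum_mul]; exact mul_le_mul_of_nonneg_right (ih a) hc
      _ = c ^ (k + 1) := (pow_succ c k).symm

theorem summable_pow_of_forall_exists_sum_pow_apply_lt_one
    (hleak : ∀ a, ∃ n, ∑ b, (Q ^ n) a b < 1) : Summable fun n => Q ^ n := by
  have hleak_eventually (a : V) : ∀ᶠ n in atTop, ∑ b, (Q ^ n) a b < 1 := by
    obtain ⟨n, hn⟩ := hleak a
    exact eventually_atTop.2 ⟨n, fun m hm => (antitone_sum_pow_apply hQ0 hQ1 a hm).trans_lt hn⟩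
  obtain ⟨N, hN, hNleak⟩ :=
    ((eventually_gt_atTop 0).and (eventually_all.2 hleak_eventually)).exists
  obtain ⟨c, ⟨hc0, hc1⟩, hc⟩ := (Eventually.and (Ioo_mem_nhdsLT one_pos)
    (eventually_all.2 fun a => Ioo_mem_nhdsLT (hNleak a))).exists
  have hdecay (n : ℕ) (a : V) : ∑ b, (Q ^ n) a b ≤ c ^ (n / N) :=
    (antitone_sum_pow_apply hQ0 hQ1 a (Nat.div_mul_le_self n N)).trans
      (sum_pow_mul_apply_le_pow hQ0 hc0.le (fun a => (hc a).1.le) _ a)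
  refine Pi.summable.2 fun a => Pi.summable.2 fun b =>
    summable_of_le_pow_div hN hc0.le hc1 (fun n => pow_apply_nonneg hQ0 n a b) fun n => ?_
  exact (single_le_sum (fun b _ => pow_apply_nonneg hQ0 n a b) (mem_univ b)).trans (hdecay n a)

end Substochastic

end Matrix

section Hitting

variable {V : Type*} [Fintype V] [DecidableEq V] (P : Matrix V V ℝ) (S : Finset V)

def avoidMatrix : Matrix V V ℝ := of fun a b => if b ∈ S then 0 else P a b

def enterMatrix : Matrix V V ℝ := of fun a b => if b ∈ S then P a b else 0

omit [Fintype V] in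
theorem avoidMatrix_add_enterMatrix : avoidMatrix P S + enterMatrix P S = P := by
  ext a b
  by_cases hb : b ∈ S <;> simp [avoidMatrix, enterMatrix, hb]

theorem vecMul_avoidMatrix (π : V → ℝ) :
    π ᵥ* avoidMatrix P S = (↑S : Set V)ᶜ.indicator (π ᵥ* P) := by
  ext b
  by_cases hb : b ∈ S <;> simp [avoidMatrix, vecMul, dotProduct, hb]

theorem vecMul_enterMatrix (π : V → ℝ) :
    π ᵥ* enterMatrix P S = (↑S : Set V).indicator (π ᵥ* P) := by
  ext b
  by_cases hb : b ∈ S <;> simp [enterMatrix, vecMul, dotProduct, hb]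

variable {P S}

omit [Fintype V] in
theorem avoidMatrix_apply_nonneg (hP0 : ∀ a b, 0 ≤ P a b) (a b : V) :
    0 ≤ avoidMatrix P S a b := by
  by_cases hb : b ∈ S <;> simp [avoidMatrix, hb, hP0 a b]

omit [Fintype V] in
theorem avoidMatrix_apply_le (hP0 : ∀ a b, 0 ≤ P a b) (a b : V) :
    avoidMatrix P S a b ≤ P a b := by
  by_cases hb : b ∈ S <;> simp [avoidMatrix, hb, hP0 a b]

theorem sum_avoidMatrix_apply_le_one (hP : P ∈ rowStochastic ℝ V) (a : V) :
    ∑ b, avoidMatrix P S a b ≤ 1 :=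
  (sum_le_sum fun b _ => avoidMatrix_apply_le hP.1 a b).trans
    (sum_row_of_mem_rowStochastic hP a).le

theorem exists_sum_pow_avoidMatrix_apply_lt_one (hP : P ∈ rowStochastic ℝ V) {u x : V}
    (hux : 0 < P u x) (hx : x ∈ S ∨ ∃ n, ∑ b, (avoidMatrix P S ^ n) x b < 1) :
    ∃ n, ∑ b, (avoidMatrix P S ^ n) u b < 1 := by
  by_cases hxS : x ∈ S
  · refine ⟨1, ?_⟩
    rw [pow_one, ← sum_row_of_mem_rowStochastic hP u]
    exact sum_lt_sum (fun b _ => avoidMatrix_apply_le hP.1 u b)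
      ⟨x, mem_univ x, by simpa [avoidMatrix, hxS] using hux⟩
  · obtain ⟨n, hn⟩ := hx.resolve_left hxS
    exact ⟨1 + n, sum_pow_one_add_apply_lt_one (avoidMatrix_apply_nonneg hP.1)
      (sum_avoidMatrix_apply_le_one hP) (by simpa [avoidMatrix, hxS]) hn⟩

theorem summable_pow_avoidMatrix (hP : P ∈ rowStochastic ℝ V)
    (hreach : ∀ u, ∃ s ∈ S, Relation.ReflTransGen (fun a b => 0 < P a b) u s) :
    Summable fun n => avoidMatrix P S ^ n := by
  have hleak (x : V) : x ∈ S ∨ ∃ n, ∑ b, (avoidMatrix P S ^ n) x b < 1 := by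
    obtain ⟨s, hs, hxs⟩ := hreach x
    induction hxs using Relation.ReflTransGen.head_induction_on with
    | refl => exact .inl hs
    | head hyz _ ih => exact .inr (exists_sum_pow_avoidMatrix_apply_lt_one hP hyz ih)
  refine summable_pow_of_forall_exists_sum_pow_apply_lt_one (avoidMatrix_apply_nonneg hP.1)
    (sum_avoidMatrix_apply_le_one hP) fun u => ?_
  obtain ⟨x, -, hux⟩ : ∃ x ∈ univ, (0 : V → ℝ) x < P u x :=
    exists_lt_of_sum_lt (by simp [sum_row_of_mem_rowStochastic hP u])
  exact exists_sum_pow_avoidMatrix_apply_lt_one hP hux (hleak x)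

theorem hitMatrix_eq_tsum_pow_mul (h : Summable fun n => avoidMatrix P S ^ n) :
    hitMatrix P S = (∑' n, avoidMatrix P S ^ n) * enterMatrix P S :=
  h.tsum_mul_right _

theorem hitMatrix_apply_of_notMem (h : Summable fun n => avoidMatrix P S ^ n) (a : V) {b : V}
    (hb : b ∉ S) : hitMatrix P S a b = 0 := by
  rw [hitMatrix_eq_tsum_pow_mul h, mul_apply]
  exact sum_eq_zero fun y _ => by simp [enterMatrix, hb]

theorem hitMatrix_mulVec_one (h : Summable fun n => avoidMatrix P S ^ n) (hP : P *ᵥ 1 = 1) :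
    hitMatrix P S *ᵥ 1 = 1 := by
  have henter : enterMatrix P S *ᵥ 1 = (1 - avoidMatrix P S) *ᵥ 1 := by
    rw [sub_mulVec, one_mulVec, eq_sub_iff_add_eq', ← add_mulVec, avoidMatrix_add_enterMatrix, hP]
  rw [hitMatrix_eq_tsum_pow_mul h, ← mulVec_mulVec, henter, mulVec_mulVec,
    h.tsum_pow_mul_one_sub, one_mulVec]

theorem indicator_vecMul_hitMatrix (h : Summable fun n => avoidMatrix P S ^ n) {π : V → ℝ}
    (hπ : π ᵥ* P = π) :
    (↑S : Set V).indicator π ᵥ* hitMatrix P S = (↑S : Set V).indicator π := by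
  have hx : (↑S : Set V).indicator π = π ᵥ* (1 - avoidMatrix P S) := by
    rw [vecMul_sub, vecMul_one, vecMul_avoidMatrix, hπ, Set.indicator_compl, sub_sub_cancel]
  calc (↑S : Set V).indicator π ᵥ* hitMatrix P S
      = π ᵥ* ((1 - avoidMatrix P S) * ∑' n, avoidMatrix P S ^ n) ᵥ* enterMatrix P S := by
        rw [hitMatrix_eq_tsum_pow_mul h, hx, vecMul_vecMul, vecMul_vecMul, mul_assoc]
    _ = (↑S : Set V).indicator π := by
        rw [h.one_sub_mul_tsum_pow, vecMul_one, vecMul_enterMatrix, hπ]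

theorem sum_mul_hitMatrix_apply (h : Summable fun n => avoidMatrix P S ^ n) {π : V → ℝ}
    (hπ : π ᵥ* P = π) {v : V} (hv : v ∈ S) : ∑ u ∈ S, π u * hitMatrix P S u v = π v := by
  have hcol := congrFun (indicator_vecMul_hitMatrix h hπ) v
  simp only [vecMul, dotProduct, Set.indicator_apply, mem_coe, ite_mul, zero_mul] at hcol
  rwa [sum_ite_mem, univ_inter, if_pos hv] at hcol

theorem sum_hitMatrix_apply (h : Summable fun n => avoidMatrix P S ^ n) (hP : P *ᵥ 1 = 1)
    (v : V) : ∑ u ∈ S, hitMatrix P S v u = 1 := by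
  have hrow := congrFun (hitMatrix_mulVec_one h hP) v
  simp only [mulVec, dotProduct, mul_one, Pi.one_apply] at hrow
  rwa [← sum_subset (subset_univ S) fun u _ hu => hitMatrix_apply_of_notMem h v hu] at hrow

end Hitting

/-- The Schur complement of an Eulerian weighted digraph onto `S`, whose edge
from `u` to `v` has weight `deg u * P[u → v]`, is again Eulerian, and every
vertex of `S` keeps the same degree as in `G`. -/
theorem stmt10 {V : Type*} [Fintype V] [DecidableEq V]
    (w : V → V → ℝ) (hw : ∀ a b, 0 ≤ w a b)
    (hconn : ∀ u v : V, Relation.ReflTransGen (fun a b => 0 < w a b) u v)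
    (deg : V → ℝ) (hdeg : ∀ v, deg v = ∑ u, w v u) (hdegpos : ∀ v, 0 < deg v)
    (heul : ∀ v, ∑ u, w u v = deg v)
    (P : Matrix V V ℝ) (hP : ∀ a b, P a b = w a b / deg a)
    (S : Finset V)
    (wS : V → V → ℝ) (hwS : ∀ u v, wS u v = deg u * hitMatrix P S u v) :
    ∀ v ∈ S, (∑ u ∈ S, wS u v = deg v) ∧ (∑ u ∈ S, wS v u = deg v) := by
  intro v hv
  have hPw (a b : V) : deg a * P a b = w a b := by
    rw [hP, mul_div_cancel₀ _ (hdegpos a).ne']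
  have hstoch : P ∈ rowStochastic ℝ V := by
    refine mem_rowStochastic_iff_sum.2 ⟨fun a b => ?_, fun a => ?_⟩
    · rw [hP]; exact div_nonneg (hw a b) (hdegpos a).le
    · rw [← mul_right_inj' (hdegpos a).ne', mul_sum, mul_one]
      simp only [hPw]
      exact (hdeg a).symm
  have hstat : deg ᵥ* P = deg := funext fun b => by
    simp only [vecMul, dotProduct, hPw, heul]
  have hsum : Summable fun n => avoidMatrix P S ^ n :=
    summable_pow_avoidMatrix hstoch fun u => ⟨v, hv, Relation.ReflTransGen.mono
      (fun a b hab => by rw [hP]; exact div_pos hab (hdegpos a)) _ _ (hconn u v)⟩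
  refine ⟨?_, ?_⟩
  · simpa only [hwS] using sum_mul_hitMatrix_apply hsum hstat hv
  · simp only [hwS, ← mul_sum, sum_hitMatrix_apply hsum (one_vecMul_of_mem_rowStochastic hstoch),
      mul_one]
end
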